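/- arXiv:1706.05889 — 2 statements merged into one kernel-verified Lean document; each statement's English description precedes it below -/
import Mathlib

section
/- Let N, M ≥ 1, let Q ∈ ℝ^{N×M} be row-stochastic with strictly positive entries, let a ∈ ℝ^N with a_n ≥ 0 for all n, and let b ∈ ℝ satisfy min_n a_n < b. Define g(λ) = sup_{p ∈ Δ_N} [ I(p,Q) + λ(b − Σ_{n=1}^N a_n p_n) ] for λ ∈ ℝ. Then for every Λ > log N / (b − min_n a_n) there exists d > 0 such that d is a subgradient of g at Λ, i.e., g(t) ≥ g(Λ) + d·(t − Λ) for all t ∈ ℝ. -/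
open Real

/-- Average mutual information `I(p,Q)`. -/
noncomputable def AMI {N M : ℕ} (p : Fin N → ℝ) (Q : Fin N → Fin M → ℝ) : ℝ :=
  ∑ n, ∑ m, p n * Q n m * Real.log (Q n m / ∑ l, p l * Q l m)

/-- `Q` is row-stochastic with strictly positive entries. -/
def rowStochPos {N M : ℕ} (Q : Fin N → Fin M → ℝ) : Prop :=
  (∀ n m, 0 < Q n m) ∧ ∀ n, ∑ m, Q n m = 1

/-- The Lagrangian dual function `g(λ)` of the average-cost constrained capacity problem. -/
noncomputable def gfun {N M : ℕ} (Q : Fin N → Fin M → ℝ) (a : Fin N → ℝ) (b : ℝ)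
    (lam : ℝ) : ℝ :=
  sSup { x | ∃ p ∈ stdSimplex ℝ (Fin N), x = AMI p Q + lam * (b - ∑ n, a n * p n) }

/-!
Let `p⋆` maximize `I(p,Q) + Λ (b - ⟪a, p⟫)` over the compact simplex. Since `g` is a supremum of
functions affine in `λ`, the slope `d = b - ⟪a, p⋆⟫` of this active piece is a subgradient at `Λ`.
It is positive: the point mass at a cheapest input gives `g(Λ) ≥ Λ (b - min a) > log N`, whereas
`d ≤ 0` would give `g(Λ) ≤ I(p⋆,Q) ≤ H(p⋆) ≤ log N`.
-/

open Finset Set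

section Simplex

variable {ι : Type*} [Fintype ι] {p : ι → ℝ}

lemma sum_mul_pos_of_mem_stdSimplex (hp : p ∈ stdSimplex ℝ ι) {w : ι → ℝ} (hw : ∀ i, 0 < w i) :
    0 < ∑ i, p i * w i := by
  obtain ⟨i, hi⟩ : ∃ i, p i ≠ 0 := by
    by_contra! h
    simpa [h] using hp.2
  exact sum_pos' (fun j _ => mul_nonneg (hp.1 j) (hw j).le)
    ⟨i, mem_univ i, mul_pos ((hp.1 i).lt_of_ne' hi) (hw i)⟩

lemma sum_negMulLog_le_log_card (hp : p ∈ stdSimplex ℝ ι) :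
    ∑ i, negMulLog (p i) ≤ log (Fintype.card ι) := by
  have : Nonempty ι := by
    by_contra! h
    simpa using hp.2
  have hc : (0 : ℝ) < Fintype.card ι := by exact_mod_cast Fintype.card_pos
  have hJ := concaveOn_negMulLog.le_map_sum (t := univ) (w := fun _ => (Fintype.card ι : ℝ)⁻¹)
    (p := p) (fun _ _ => by positivity) (by simp [hc.ne']) (fun i _ => hp.1 i)
  simp only [smul_eq_mul, ← mul_sum, hp.2, mul_one, negMulLog, log_inv] at hJ
  rwa [neg_mul_neg, mul_le_mul_iff_right₀ (inv_pos.2 hc)] at hJ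

end Simplex

section MutualInformation

variable {N M : ℕ} {Q : Fin N → Fin M → ℝ} {p : Fin N → ℝ}

lemma mul_log_div_le_mul_neg_log {x y z : ℝ} (hx : 0 ≤ x) (hy : 0 < y) (hxyz : x * y ≤ z) :
    x * y * log (y / z) ≤ x * y * -log x := by
  rcases hx.eq_or_lt with rfl | hx
  · simp
  have hz : 0 < z := (mul_pos hx hy).trans_le hxyz
  have h : log (x * y / z) ≤ 0 := log_nonpos (by positivity) ((div_le_one hz).2 hxyz)
  rw [mul_div_assoc, log_mul hx.ne' (by positivity)] at h
  exact mul_le_mul_of_nonneg_left (by linarith) (by positivity)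

lemma AMI_le_sum_negMulLog (hQ : rowStochPos Q) (hp : p ∈ stdSimplex ℝ (Fin N)) :
    AMI p Q ≤ ∑ n, negMulLog (p n) := by
  refine sum_le_sum fun n _ => ?_
  calc ∑ m, p n * Q n m * log (Q n m / ∑ l, p l * Q l m)
      ≤ ∑ m, p n * Q n m * -log (p n) := sum_le_sum fun m _ =>
        mul_log_div_le_mul_neg_log (hp.1 n) (hQ.1 n m)
          (single_le_sum (f := fun l => p l * Q l m)
            (fun l _ => mul_nonneg (hp.1 l) (hQ.1 l m).le) (mem_univ n))
    _ = negMulLog (p n) := by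
      rw [← sum_mul, ← mul_sum, hQ.2 n, negMulLog]
      ring

lemma AMI_le_log (hQ : rowStochPos Q) (hp : p ∈ stdSimplex ℝ (Fin N)) : AMI p Q ≤ log N := by
  simpa using (AMI_le_sum_negMulLog hQ hp).trans (sum_negMulLog_le_log_card hp)

lemma AMI_single (n₀ : Fin N) : AMI (Pi.single n₀ 1) Q = 0 := by
  refine sum_eq_zero fun n _ => sum_eq_zero fun m _ => ?_
  rcases eq_or_ne n n₀ with rfl | hn
  · by_cases hQ : Q n m = 0 <;> simp [Pi.single_apply, hQ]
  · simp [hn]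

lemma continuousOn_AMI (hQ : ∀ n m, 0 < Q n m) :
    ContinuousOn (fun p => AMI p Q) (stdSimplex ℝ (Fin N)) := by
  refine continuousOn_finsetSum _ fun n _ => continuousOn_finsetSum _ fun m _ => ?_
  have hq : ∀ p ∈ stdSimplex ℝ (Fin N), 0 < ∑ l, p l * Q l m :=
    fun p hp => sum_mul_pos_of_mem_stdSimplex hp (hQ · m)
  refine ContinuousOn.mul (by fun_prop) (ContinuousOn.log ?_ fun p hp => ?_)
  · exact continuousOn_const.div (by fun_prop) fun p hp => (hq p hp).ne'
  · exact (div_pos (hQ n m) (hq p hp)).ne'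

end MutualInformation

lemma gfun_eq_sSup_image {N M : ℕ} (Q : Fin N → Fin M → ℝ) (a : Fin N → ℝ) (b t : ℝ) :
    gfun Q a b t =
      sSup ((fun p => AMI p Q + t * (b - ∑ n, a n * p n)) '' stdSimplex ℝ (Fin N)) := by
  simp only [gfun, Set.image, eq_comm]

lemma sSup_image_add_mul_ge {α : Type*} {S : Set α} {F G : α → ℝ} {Λ t : ℝ} {p : α}
    (hp : p ∈ S) (hΛ : sSup ((fun q => F q + Λ * G q) '' S) = F p + Λ * G p)
    (ht : BddAbove ((fun q => F q + t * G q) '' S)) :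
    sSup ((fun q => F q + Λ * G q) '' S) + G p * (t - Λ) ≤
      sSup ((fun q => F q + t * G q) '' S) :=
  calc sSup ((fun q => F q + Λ * G q) '' S) + G p * (t - Λ) = F p + t * G p := by
        rw [hΛ]; ring
    _ ≤ _ := le_csSup ht (mem_image_of_mem _ hp)

theorem dual_function_positive_subgradient_general
    {N M : ℕ} (hN : 0 < N)
    (Q : Fin N → Fin M → ℝ) (hQ : rowStochPos Q)
    (a : Fin N → ℝ) (b : ℝ)
    (hb : Finset.univ.inf' (Finset.univ_nonempty_iff.mpr (Fin.pos_iff_nonempty.mp hN)) a < b)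
    (Λ : ℝ)
    (hΛ : Real.log N /
      (b - Finset.univ.inf' (Finset.univ_nonempty_iff.mpr (Fin.pos_iff_nonempty.mp hN)) a)
      < Λ) :
    ∃ d : ℝ, 0 < d ∧ ∀ t : ℝ, gfun Q a b t ≥ gfun Q a b Λ + d * (t - Λ) := by
  set L : ℝ → (Fin N → ℝ) → ℝ := fun t p => AMI p Q + t * (b - ∑ n, a n * p n)
  have hL : ∀ t, ContinuousOn (L t) (stdSimplex ℝ (Fin N)) := fun t =>
    (continuousOn_AMI hQ.1).add (by fun_prop)
  obtain ⟨n₀, -, hn₀⟩ := exists_mem_eq_inf' _ a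
  rw [hn₀] at hb hΛ
  obtain ⟨p, hp, hgΛ, -⟩ := (isCompact_stdSimplex ℝ (Fin N)).exists_sSup_image_eq_and_ge
    ⟨_, single_mem_stdSimplex ℝ n₀⟩ (hL Λ)
  have hΛN : log N < Λ * (b - a n₀) := (div_lt_iff₀ (sub_pos.2 hb)).1 hΛ
  have hΛ_pos : 0 < Λ := (div_nonneg (log_natCast_nonneg N) (sub_pos.2 hb).le).trans_lt hΛ
  have hlow : Λ * (b - a n₀) ≤ L Λ p := by
    rw [← hgΛ]
    refine le_csSup ((isCompact_stdSimplex ℝ _).bddAbove_image (hL Λ))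
      ⟨_, single_mem_stdSimplex ℝ n₀, ?_⟩
    simp [L, AMI_single, Pi.single_apply]
  have hd : 0 < b - ∑ n, a n * p n := by
    by_contra! h
    nlinarith [AMI_le_log hQ hp]
  refine ⟨_, hd, fun t => ?_⟩
  rw [gfun_eq_sSup_image, gfun_eq_sSup_image]
  exact sSup_image_add_mul_ge hp hgΛ ((isCompact_stdSimplex ℝ _).bddAbove_image (hL t))

theorem dual_function_positive_subgradient
    {N M : ℕ} (hN : 0 < N) (hM : 0 < M)
    (Q : Fin N → Fin M → ℝ) (hQ : rowStochPos Q)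
    (a : Fin N → ℝ) (ha : ∀ n, 0 ≤ a n) (b : ℝ)
    (hb : Finset.univ.inf' (Finset.univ_nonempty_iff.mpr (Fin.pos_iff_nonempty.mp hN)) a < b)
    (Λ : ℝ)
    (hΛ : Real.log N /
      (b - Finset.univ.inf' (Finset.univ_nonempty_iff.mpr (Fin.pos_iff_nonempty.mp hN)) a)
      < Λ) :
    ∃ d : ℝ, 0 < d ∧ ∀ t : ℝ, gfun Q a b t ≥ gfun Q a b Λ + d * (t - Λ) :=
  dual_function_positive_subgradient_general hN Q hQ a b hb Λ hΛ
end

section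
/- Let N, M ≥ 1, let p ∈ Δ_N have strictly positive entries, and let V ∈ ℝ^{N×M}. Then the concave conjugate of the average mutual information with respect to the channel matrix satisfies: inf over row-stochastic Q ∈ ℝ^{N×M} with strictly positive entries of [ I(p,Q) + Σ_{n=1}^N Σ_{m=1}^M V_{nm} Q_{nm} ] = sup { Σ_{n=1}^N λ_n : λ ∈ ℝ^N, Σ_{n=1}^N p_n exp( (λ_n − V_{nm}) / p_n ) ≤ 1 for all m ∈ {1,…,M} }. -/
/-!
Write `Zₙ(r) = ∑ₘ rₘ exp (-Vₙₘ / pₙ)` and `F(r) = -∑ₙ pₙ log Zₙ(r)` for an output distribution `r`.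
Weak duality: for dual-feasible `λ`, Jensen's inequality for `log` gives `∑ λ ≤ F(r)`, and the Gibbs
variational principle gives `F(pQ) ≤ I(p,Q) + ⟨V,Q⟩`. Conversely, for `r > 0` the Gibbs channel
`Qₙₘ ∝ rₘ exp (-Vₙₘ / pₙ)` satisfies `I(p,Q) + ⟨V,Q⟩ ≤ ∑ₙ pₙ D(Qₙ ‖ r) + ⟨V,Q⟩ = F(r)`.
At a minimiser `r*` of `F` on the simplex, the first-order condition towards each vertex says that
`λₙ = -pₙ log Zₙ(r*)` is dual feasible, and `∑ λ = F(r*)`.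
-/

open Real

open Finset Filter Topology

section

variable {ι : Type*} [Fintype ι]

theorem sum_mul_log_le_log_sum_mul (w x : ι → ℝ) (hw : ∀ i, 0 ≤ w i) (hw1 : ∑ i, w i = 1)
    (hx : ∀ i, 0 < x i) : ∑ i, w i * log (x i) ≤ log (∑ i, w i * x i) := by
  simpa only [smul_eq_mul] using
    strictConcaveOn_log_Ioi.concaveOn.le_map_sum (fun i _ => hw i) hw1 (fun i _ => hx i)

theorem neg_log_sum_mul_exp_neg_le (q r v : ι → ℝ) (hq : ∀ i, 0 < q i) (hq1 : ∑ i, q i = 1)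
    (hr : ∀ i, 0 < r i) :
    -log (∑ i, r i * exp (-v i)) ≤ ∑ i, q i * log (q i / r i) + ∑ i, q i * v i := by
  have hjensen := sum_mul_log_le_log_sum_mul q (fun i => r i * exp (-v i) / q i)
    (fun i => (hq i).le) hq1 (fun i => by have := hq i; have := hr i; positivity)
  have hlog : ∀ i, q i * log (r i * exp (-v i) / q i) = -(q i * log (q i / r i) + q i * v i) := by
    intro i
    rw [log_div (by have := hr i; positivity) (hq i).ne', log_mul (hr i).ne' (exp_pos _).ne',
      log_exp, log_div (hq i).ne' (hr i).ne']
    ring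
  have hsum : ∑ i, q i * (r i * exp (-v i) / q i) = ∑ i, r i * exp (-v i) :=
    sum_congr rfl fun i _ => mul_div_cancel₀ _ (hq i).ne'
  simp only [hlog, hsum, sum_neg_distrib, sum_add_distrib] at hjensen
  linarith

theorem sum_mul_log_div_nonneg (q r : ι → ℝ) (hq : ∀ i, 0 < q i) (hq1 : ∑ i, q i = 1)
    (hr : ∀ i, 0 < r i) (hr1 : ∑ i, r i = 1) : 0 ≤ ∑ i, q i * log (q i / r i) := by
  simpa [hr1] using neg_log_sum_mul_exp_neg_le q r 0 hq hq1 hr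

theorem sum_mul_sub_div_nonpos_of_sum_mul_log_le (w x y : ι → ℝ) (hx : ∀ i, x i ≠ 0)
    (h : ∀ᶠ t in 𝓝[>] 0,
      ∑ i, w i * log ((1 - t) * x i + t * y i) ≤ ∑ i, w i * log (x i)) :
    ∑ i, w i * ((y i - x i) / x i) ≤ 0 := by
  set f : ℝ → ℝ := fun t => ∑ i, w i * log ((1 - t) * x i + t * y i)
  have hf : HasDerivAt f (∑ i, w i * ((y i - x i) / x i)) 0 := by
    refine HasDerivAt.fun_sum fun i _ => HasDerivAt.const_mul (w i) ?_
    have hline : HasDerivAt (fun t : ℝ => (1 - t) * x i + t * y i) (y i - x i) 0 :=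
      ((((hasDerivAt_id' (0 : ℝ)).const_sub 1).mul_const (x i)).fun_add
        ((hasDerivAt_id' (0 : ℝ)).mul_const (y i))).congr_deriv (by ring)
    simpa using hline.log (by simpa using hx i)
  have hslope :=
    (hasDerivWithinAt_iff_tendsto_slope' (Set.self_notMem_Ioi (a := (0 : ℝ)))).1 hf.hasDerivWithinAt
  refine le_of_tendsto hslope ((h.and self_mem_nhdsWithin).mono fun t ⟨ht, htpos⟩ => ?_)
  rw [slope_def_field]
  refine div_nonpos_of_nonpos_of_nonneg ?_ (by simpa using htpos.le)
  simpa [f] using ht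

end

section

variable {N M : ℕ} (p : Fin N → ℝ) (V : Fin N → Fin M → ℝ)

noncomputable def outputDist (Q : Fin N → Fin M → ℝ) (m : Fin M) : ℝ := ∑ n, p n * Q n m

noncomputable def avgRelEntropy (Q : Fin N → Fin M → ℝ) (r : Fin M → ℝ) : ℝ :=
  ∑ n, ∑ m, p n * Q n m * log (Q n m / r m)

noncomputable def partitionFn (r : Fin M → ℝ) (n : Fin N) : ℝ := ∑ m, r m * exp (-V n m / p n)

noncomputable def dualPoint (r : Fin M → ℝ) (n : Fin N) : ℝ := p n * -log (partitionFn p V r n)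

noncomputable def freeEnergy (r : Fin M → ℝ) : ℝ := ∑ n, dualPoint p V r n

noncomputable def gibbsChannel (r : Fin M → ℝ) (n : Fin N) (m : Fin M) : ℝ :=
  r m * exp (-V n m / p n) / partitionFn p V r n

theorem AMI_eq_avgRelEntropy (Q : Fin N → Fin M → ℝ) :
    AMI p Q = avgRelEntropy p Q (outputDist p Q) := rfl

theorem partitionFn_pos {r : Fin M → ℝ} (hr : r ∈ stdSimplex ℝ (Fin M)) (n : Fin N) :
    0 < partitionFn p V r n := by
  obtain ⟨m, -, hm⟩ := exists_lt_of_sum_lt (s := univ) (f := 0) (g := r)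
    (by simp [hr.2])
  exact sum_pos' (fun m _ => mul_nonneg (hr.1 m) (exp_pos _).le)
    ⟨m, mem_univ m, mul_pos hm (exp_pos _)⟩

theorem partitionFn_smul_add_smul_single (r : Fin M → ℝ) (t : ℝ) (m : Fin M) (n : Fin N) :
    partitionFn p V ((1 - t) • r + t • Pi.single m 1) n
      = (1 - t) * partitionFn p V r n + t * exp (-V n m / p n) := by
  simp [partitionFn, add_mul, sum_add_distrib, mul_sum, Pi.single_apply, mul_assoc]

theorem rowStochPos_gibbsChannel {r : Fin M → ℝ} (hr : ∀ m, 0 < r m) (hr1 : ∑ m, r m = 1) :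
    rowStochPos (gibbsChannel p V r) :=
  have hZ := partitionFn_pos p V ⟨fun m => (hr m).le, hr1⟩
  ⟨fun n m => div_pos (mul_pos (hr m) (exp_pos _)) (hZ n),
    fun n => by simp only [gibbsChannel, ← sum_div]; exact div_self (hZ n).ne'⟩

theorem continuousOn_freeEnergy :
    ContinuousOn (freeEnergy p V) (stdSimplex ℝ (Fin M)) := by
  have hZ : ∀ n, Continuous fun r => partitionFn p V r n := fun n => by
    unfold partitionFn; fun_prop
  exact continuousOn_finsetSum _ fun n _ => continuousOn_const.mul
    ((hZ n).continuousOn.log fun r hr => (partitionFn_pos p V hr n).ne').neg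

variable {p}

theorem outputDist_pos (hp : ∀ n, 0 < p n) (hp1 : ∑ n, p n = 1) {Q : Fin N → Fin M → ℝ}
    (hQ : rowStochPos Q) (m : Fin M) : 0 < outputDist p Q m :=
  sum_pos (fun n _ => mul_pos (hp n) (hQ.1 n m))
    (nonempty_of_sum_ne_zero (hp1 ▸ one_ne_zero))

theorem sum_outputDist (hp1 : ∑ n, p n = 1) {Q : Fin N → Fin M → ℝ} (hQ : rowStochPos Q) :
    ∑ m, outputDist p Q m = 1 := by
  simp only [outputDist]
  rw [sum_comm]
  simp [← mul_sum, hQ.2, hp1]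

theorem AMI_le_avgRelEntropy (hp : ∀ n, 0 < p n) (hp1 : ∑ n, p n = 1)
    {Q : Fin N → Fin M → ℝ} (hQ : rowStochPos Q) {r : Fin M → ℝ} (hr : ∀ m, 0 < r m)
    (hr1 : ∑ m, r m = 1) : AMI p Q ≤ avgRelEntropy p Q r := by
  have hq := outputDist_pos hp hp1 hQ
  rw [AMI_eq_avgRelEntropy, ← sub_nonneg]
  calc 0 ≤ ∑ m, outputDist p Q m * log (outputDist p Q m / r m) :=
        sum_mul_log_div_nonneg _ r hq (sum_outputDist hp1 hQ) hr hr1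
    _ = ∑ n, ∑ m, p n * Q n m * log (outputDist p Q m / r m) := by
        rw [sum_comm]
        simp only [outputDist, sum_mul]
    _ = avgRelEntropy p Q r - avgRelEntropy p Q (outputDist p Q) := by
        simp only [avgRelEntropy, ← sum_sub_distrib, ← mul_sub]
        refine sum_congr rfl fun n _ => sum_congr rfl fun m _ => ?_
        rw [log_div (hQ.1 n m).ne' (hr m).ne', log_div (hQ.1 n m).ne' (hq m).ne',
          log_div (hq m).ne' (hr m).ne']
        ring

theorem freeEnergy_le_avgRelEntropy_add (hp : ∀ n, 0 < p n) {Q : Fin N → Fin M → ℝ}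
    (hQ : rowStochPos Q) {r : Fin M → ℝ} (hr : ∀ m, 0 < r m) :
    freeEnergy p V r ≤ avgRelEntropy p Q r + ∑ n, ∑ m, V n m * Q n m := by
  calc freeEnergy p V r
      ≤ ∑ n, p n * (∑ m, Q n m * log (Q n m / r m) + ∑ m, Q n m * (V n m / p n)) := by
        refine sum_le_sum fun n _ => mul_le_mul_of_nonneg_left ?_ (hp n).le
        simpa only [partitionFn, neg_div] using
          neg_log_sum_mul_exp_neg_le (Q n) r (fun m => V n m / p n) (hQ.1 n) (hQ.2 n) hr
    _ = avgRelEntropy p Q r + ∑ n, ∑ m, V n m * Q n m := by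
        simp only [avgRelEntropy, mul_add, mul_sum, ← sum_add_distrib]
        refine sum_congr rfl fun n _ => sum_congr rfl fun m _ => ?_
        field_simp [(hp n).ne']

theorem avgRelEntropy_gibbsChannel_add (hp : ∀ n, 0 < p n) {r : Fin M → ℝ}
    (hr : ∀ m, 0 < r m) (hr1 : ∑ m, r m = 1) :
    avgRelEntropy p (gibbsChannel p V r) r + ∑ n, ∑ m, V n m * gibbsChannel p V r n m
      = freeEnergy p V r := by
  have hZ := partitionFn_pos p V ⟨fun m => (hr m).le, hr1⟩
  have hQ := rowStochPos_gibbsChannel p V hr hr1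
  simp only [avgRelEntropy, freeEnergy, dualPoint, ← sum_add_distrib]
  refine sum_congr rfl fun n _ => ?_
  have hlog : ∀ m,
      log (gibbsChannel p V r n m / r m) = -V n m / p n - log (partitionFn p V r n) := by
    intro m
    have hratio : gibbsChannel p V r n m / r m = exp (-V n m / p n) / partitionFn p V r n := by
      simp only [gibbsChannel]
      field_simp [(hr m).ne']
    rw [hratio, log_div (exp_pos _).ne' (hZ n).ne', log_exp]
  calc ∑ m, (p n * gibbsChannel p V r n m * log (gibbsChannel p V r n m / r m)
        + V n m * gibbsChannel p V r n m)
      = (∑ m, gibbsChannel p V r n m) * (p n * -log (partitionFn p V r n)) := by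
        rw [sum_mul]
        refine sum_congr rfl fun m _ => ?_
        rw [hlog]
        field_simp [(hp n).ne']
        ring
    _ = p n * -log (partitionFn p V r n) := by rw [hQ.2 n, one_mul]

theorem sum_le_freeEnergy (hp : ∀ n, 0 < p n) (hp1 : ∑ n, p n = 1) {lam : Fin N → ℝ}
    (hlam : ∀ m, ∑ n, p n * exp ((lam n - V n m) / p n) ≤ 1) {r : Fin M → ℝ}
    (hr : r ∈ stdSimplex ℝ (Fin M)) : ∑ n, lam n ≤ freeEnergy p V r := by
  have hZ := partitionFn_pos p V hr
  set x : Fin N → ℝ := fun n => exp (lam n / p n) * partitionFn p V r n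
  have hx : ∀ n, 0 < x n := fun n => mul_pos (exp_pos _) (hZ n)
  have hmass : ∑ n, p n * x n ≤ 1 := by
    have hexp : ∀ n m, exp (lam n / p n) * exp (-V n m / p n) = exp ((lam n - V n m) / p n) :=
      fun n m => by rw [← exp_add]; ring_nf
    calc ∑ n, p n * x n = ∑ m, r m * ∑ n, p n * exp ((lam n - V n m) / p n) := by
          simp only [x, partitionFn, mul_sum, ← hexp]
          rw [sum_comm]
          refine sum_congr rfl fun m _ => sum_congr rfl fun n _ => ?_
          ring
      _ ≤ ∑ m, r m * 1 := by gcongr with m; exacts [hr.1 m, hlam m]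
      _ = 1 := by simp [hr.2]
  have hlogx : ∀ n, p n * log (x n) = lam n - dualPoint p V r n := by
    intro n
    rw [log_mul (exp_pos _).ne' (hZ n).ne', log_exp, dualPoint]
    field_simp [(hp n).ne']
    ring
  have hjensen := sum_mul_log_le_log_sum_mul p x (fun n => (hp n).le) hp1 hx
  simp only [hlogx, sum_sub_distrib] at hjensen
  have := log_nonpos (sum_nonneg fun n _ => mul_nonneg (hp n).le (hx n).le) hmass
  rw [freeEnergy]
  linarith

theorem sum_le_AMI_add (hp : ∀ n, 0 < p n) (hp1 : ∑ n, p n = 1) {lam : Fin N → ℝ}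
    (hlam : ∀ m, ∑ n, p n * exp ((lam n - V n m) / p n) ≤ 1) {Q : Fin N → Fin M → ℝ}
    (hQ : rowStochPos Q) : ∑ n, lam n ≤ AMI p Q + ∑ n, ∑ m, V n m * Q n m := by
  have hq := outputDist_pos hp hp1 hQ
  rw [AMI_eq_avgRelEntropy]
  exact (sum_le_freeEnergy V hp hp1 hlam ⟨fun m => (hq m).le, sum_outputDist hp1 hQ⟩).trans
    (freeEnergy_le_avgRelEntropy_add V hp hQ hq)

theorem exists_AMI_add_le_freeEnergy (hp : ∀ n, 0 < p n) (hp1 : ∑ n, p n = 1)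
    {r : Fin M → ℝ} (hr : ∀ m, 0 < r m) (hr1 : ∑ m, r m = 1) :
    ∃ Q, rowStochPos Q ∧ AMI p Q + ∑ n, ∑ m, V n m * Q n m ≤ freeEnergy p V r := by
  have hQ := rowStochPos_gibbsChannel p V hr hr1
  refine ⟨gibbsChannel p V r, hQ, ?_⟩
  rw [← avgRelEntropy_gibbsChannel_add V hp hr hr1]
  gcongr
  exact AMI_le_avgRelEntropy hp hp1 hQ hr hr1

theorem freeEnergy_le_add_of_exp_neg_mul_le (hp : ∀ n, 0 ≤ p n) (hp1 : ∑ n, p n = 1)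
    {r r' : Fin M → ℝ} (hr : r ∈ stdSimplex ℝ (Fin M)) {δ : ℝ}
    (h : ∀ n, exp (-δ) * partitionFn p V r n ≤ partitionFn p V r' n) :
    freeEnergy p V r' ≤ freeEnergy p V r + δ := by
  have hZ := partitionFn_pos p V hr
  calc freeEnergy p V r' ≤ ∑ n, p n * -log (exp (-δ) * partitionFn p V r n) := by
        refine sum_le_sum fun n _ => mul_le_mul_of_nonneg_left ?_ (hp n)
        exact neg_le_neg (log_le_log (by have := hZ n; positivity) (h n))
    _ = ∑ n, (dualPoint p V r n + p n * δ) := sum_congr rfl fun n _ => by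
        rw [log_mul (exp_pos _).ne' (hZ n).ne', log_exp, dualPoint]
        ring
    _ = freeEnergy p V r + δ := by
        rw [sum_add_distrib, ← sum_mul, hp1, one_mul, freeEnergy]

/-- A minimiser of `freeEnergy` may vanish somewhere, and then its Gibbs channel is not strictly
positive; mixing it with the uniform distribution costs at most `δ`. -/
theorem exists_AMI_add_le_freeEnergy_add (hp : ∀ n, 0 < p n) (hp1 : ∑ n, p n = 1)
    {r : Fin M → ℝ} (hr : r ∈ stdSimplex ℝ (Fin M)) {δ : ℝ} (hδ : 0 < δ) :
    ∃ Q, rowStochPos Q ∧ AMI p Q + ∑ n, ∑ m, V n m * Q n m ≤ freeEnergy p V r + δ := by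
  have hM : (M : ℝ) ≠ 0 := Nat.cast_ne_zero.2 (by rintro rfl; simpa using hr.2)
  have hc : 0 < 1 - exp (-δ) := by simpa using hδ
  set r' : Fin M → ℝ := fun m => exp (-δ) * r m + (1 - exp (-δ)) * (M : ℝ)⁻¹
  have hr' : ∀ m, 0 < r' m := fun m =>
    add_pos_of_nonneg_of_pos (mul_nonneg (exp_pos _).le (hr.1 m)) (by positivity)
  have hr'1 : ∑ m, r' m = 1 := by
    simp only [r', sum_add_distrib, ← mul_sum, hr.2, mul_one, sum_const, card_univ,
      Fintype.card_fin, nsmul_eq_mul]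
    field_simp
    ring
  obtain ⟨Q, hQ, hle⟩ := exists_AMI_add_le_freeEnergy V hp hp1 hr' hr'1
  refine ⟨Q, hQ, hle.trans (freeEnergy_le_add_of_exp_neg_mul_le V (fun n => (hp n).le) hp1 hr ?_)⟩
  intro n
  rw [partitionFn, partitionFn, mul_sum]
  refine sum_le_sum fun m _ => ?_
  rw [add_mul, ← mul_assoc]
  exact le_add_of_nonneg_right (by positivity)

theorem dualPoint_feasible (hp : ∀ n, 0 < p n) (hp1 : ∑ n, p n = 1) {rs : Fin M → ℝ}
    (hrs : rs ∈ stdSimplex ℝ (Fin M)) (hmin : IsMinOn (freeEnergy p V) (stdSimplex ℝ (Fin M)) rs)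
    (m : Fin M) : ∑ n, p n * exp ((dualPoint p V rs n - V n m) / p n) ≤ 1 := by
  have hZ := partitionFn_pos p V hrs
  -- `freeEnergy` does not decrease along the segment from `rs` towards the vertex `Pi.single m 1`.
  have hline : ∀ᶠ t in 𝓝[>] 0, ∑ n, p n * log ((1 - t) * partitionFn p V rs n
      + t * exp (-V n m / p n)) ≤ ∑ n, p n * log (partitionFn p V rs n) := by
    filter_upwards [Ioo_mem_nhdsGT one_pos] with t ht
    have hmem : (1 - t) • rs + t • Pi.single m 1 ∈ stdSimplex ℝ (Fin M) :=
      convex_stdSimplex ℝ (Fin M) hrs (single_mem_stdSimplex ℝ m) (by linarith [ht.2]) ht.1.le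
        (by ring)
    simpa only [freeEnergy, dualPoint, partitionFn_smul_add_smul_single, mul_neg,
      sum_neg_distrib, neg_le_neg_iff] using isMinOn_iff.1 hmin _ hmem
  have hfirst := sum_mul_sub_div_nonpos_of_sum_mul_log_le p _ _ (fun n => (hZ n).ne') hline
  have hexp : ∀ n, exp ((dualPoint p V rs n - V n m) / p n)
      = exp (-V n m / p n) / partitionFn p V rs n := by
    intro n
    rw [dualPoint, sub_div, mul_div_cancel_left₀ _ (hp n).ne', neg_div, sub_eq_add_neg, add_comm,
      exp_add, exp_neg (log _), exp_log (hZ n), div_eq_mul_inv (exp _)]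
  calc ∑ n, p n * exp ((dualPoint p V rs n - V n m) / p n)
      = ∑ n, p n * ((exp (-V n m / p n) - partitionFn p V rs n) / partitionFn p V rs n)
        + ∑ n, p n := by
        rw [← sum_add_distrib]
        refine sum_congr rfl fun n _ => ?_
        rw [hexp]
        field_simp [(hZ n).ne']
        ring
    _ ≤ 0 + 1 := add_le_add hfirst hp1.le
    _ = 1 := zero_add 1

end

theorem concave_conjugate_of_AMI_general
    {N M : ℕ} (hM : 0 < M)
    (p : Fin N → ℝ) (hp : p ∈ stdSimplex ℝ (Fin N)) (hppos : ∀ n, 0 < p n)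
    (V : Fin N → Fin M → ℝ) :
    sInf { x | ∃ Q : Fin N → Fin M → ℝ, rowStochPos Q ∧
        x = AMI p Q + ∑ n, ∑ m, V n m * Q n m } =
      sSup { x | ∃ lam : Fin N → ℝ,
        (∀ m, ∑ n, p n * Real.exp ((lam n - V n m) / p n) ≤ 1) ∧
        x = ∑ n, lam n } := by
  have hp1 : ∑ n, p n = 1 := hp.2
  obtain ⟨rs, hrs, hmin⟩ := (isCompact_stdSimplex ℝ (Fin M)).exists_isMinOn
    ⟨_, single_mem_stdSimplex ℝ ⟨0, hM⟩⟩ (continuousOn_freeEnergy p V)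
  have hfeas := dualPoint_feasible V hppos hp1 hrs hmin
  obtain ⟨Q₀, hQ₀, -⟩ := exists_AMI_add_le_freeEnergy_add V hppos hp1 hrs one_pos
  apply le_antisymm
  · calc _ ≤ freeEnergy p V rs := le_of_forall_pos_le_add fun δ hδ => by
          obtain ⟨Q, hQ, hle⟩ := exists_AMI_add_le_freeEnergy_add V hppos hp1 hrs hδ
          refine le_trans (csInf_le ⟨freeEnergy p V rs, ?_⟩ ⟨Q, hQ, rfl⟩) hle
          rintro _ ⟨Q', hQ', rfl⟩
          exact sum_le_AMI_add V hppos hp1 hfeas hQ'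
      _ ≤ _ := by
          refine le_csSup ⟨AMI p Q₀ + ∑ n, ∑ m, V n m * Q₀ n m, ?_⟩ ⟨_, hfeas, rfl⟩
          rintro _ ⟨lam, hlam, rfl⟩
          exact sum_le_AMI_add V hppos hp1 hlam hQ₀
  · refine csSup_le ⟨_, _, hfeas, rfl⟩ ?_
    rintro _ ⟨lam, hlam, rfl⟩
    refine le_csInf ⟨_, Q₀, hQ₀, rfl⟩ ?_
    rintro _ ⟨Q, hQ, rfl⟩
    exact sum_le_AMI_add V hppos hp1 hlam hQ

theorem concave_conjugate_of_AMI
    {N M : ℕ} (hN : 0 < N) (hM : 0 < M)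
    (p : Fin N → ℝ) (hp : p ∈ stdSimplex ℝ (Fin N)) (hppos : ∀ n, 0 < p n)
    (V : Fin N → Fin M → ℝ) :
    sInf { x | ∃ Q : Fin N → Fin M → ℝ, rowStochPos Q ∧
        x = AMI p Q + ∑ n, ∑ m, V n m * Q n m } =
      sSup { x | ∃ lam : Fin N → ℝ,
        (∀ m, ∑ n, p n * Real.exp ((lam n - V n m) / p n) ≤ 1) ∧
        x = ∑ n, lam n } :=
  concave_conjugate_of_AMI_general hM p hp hppos V
end
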